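/- arXiv:1807.07534 — 4 statements merged into one kernel-verified Lean document; each statement's English description precedes it below -/
import Mathlib

section
/- Let n ≥ 1. In Σ_{4n}, let Q be the permutation sending each j to j + 2n reduced modulo 4n into {1,…,4n}, and let τ = (1,3,5,…,2n−1)(2,4,6,…,2n)(4n−1,4n−3,…,2n+1)(4n,4n−2,…,2n+2). If σ ∈ Σ_{4n} satisfies σ ∘ Q ∘ σ = τ, then (Q ∘ σ)⁴ is the identity permutation. -/
/-- Let `n ≥ 1`. In `Σ_{4n}`, let `Q` send each `j` to `j + 2n` reduced
modulo `4n` into `{1,…,4n}`, and let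
`τ = (1,3,5,…,2n−1)(2,4,6,…,2n)(4n−1,4n−3,…,2n+1)(4n,4n−2,…,2n+2)`.
If `σ ∈ Σ_{4n}` satisfies `σ ∘ Q ∘ σ = τ`, then `(Q ∘ σ)⁴` is the identity. -/
theorem stmt_6 (n : ℕ) (hn : 1 ≤ n)
    (Q τ σ : Equiv.Perm {j : ℕ // j ∈ Finset.Icc 1 (4 * n)})
    (hQ : ∀ j : {j : ℕ // j ∈ Finset.Icc 1 (4 * n)}, (Q j : ℕ) = ((j : ℕ) - 1 + 2 * n) % (4 * n) + 1)
    (hτ₁ : ∀ j : {j : ℕ // j ∈ Finset.Icc 1 (4 * n)}, (j : ℕ) ≤ 2 * n - 2 → (τ j : ℕ) = (j : ℕ) + 2)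
    (hτ₂ : ∀ j : {j : ℕ // j ∈ Finset.Icc 1 (4 * n)}, (j : ℕ) = 2 * n - 1 → (τ j : ℕ) = 1)
    (hτ₃ : ∀ j : {j : ℕ // j ∈ Finset.Icc 1 (4 * n)}, (j : ℕ) = 2 * n → (τ j : ℕ) = 2)
    (hτ₄ : ∀ j : {j : ℕ // j ∈ Finset.Icc 1 (4 * n)}, 2 * n + 3 ≤ (j : ℕ) → (τ j : ℕ) = (j : ℕ) - 2)
    (hτ₅ : ∀ j : {j : ℕ // j ∈ Finset.Icc 1 (4 * n)}, (j : ℕ) = 2 * n + 1 → (τ j : ℕ) = 4 * n - 1)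
    (hτ₆ : ∀ j : {j : ℕ // j ∈ Finset.Icc 1 (4 * n)}, (j : ℕ) = 2 * n + 2 → (τ j : ℕ) = 4 * n)
    (hσ : σ * Q * σ = τ) :
    (Q * σ) ^ 4 = 1 := by
  -- A cleaner description of Q
  have mem : ∀ j : {j : ℕ // j ∈ Finset.Icc 1 (4 * n)}, 1 ≤ (j : ℕ) ∧ (j : ℕ) ≤ 4 * n := by
    intro j
    have := j.2
    rw [Finset.mem_Icc] at this
    exact this
  have hQval : ∀ j : {j : ℕ // j ∈ Finset.Icc 1 (4 * n)},
      (Q j : ℕ) = if (j : ℕ) ≤ 2 * n then (j : ℕ) + 2 * n else (j : ℕ) - 2 * n := by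
    intro j
    obtain ⟨h1, h2⟩ := mem j
    rw [hQ j]
    by_cases h : (j : ℕ) ≤ 2 * n
    · rw [if_pos h, Nat.mod_eq_of_lt (by omega)]
      omega
    · rw [if_neg h, Nat.mod_eq_sub_mod (by omega), Nat.mod_eq_of_lt (by omega)]
      omega
  -- key: Q τ Q τ = 1
  have key : Q * τ * Q * τ = 1 := by
    ext j
    simp only [Equiv.Perm.mul_apply, Equiv.Perm.one_apply]
    have hj := mem j
    rcases show (j : ℕ) ≤ 2 * n - 2 ∨ (j : ℕ) = 2 * n - 1 ∨ (j : ℕ) = 2 * n ∨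
        (j : ℕ) = 2 * n + 1 ∨ (j : ℕ) = 2 * n + 2 ∨ 2 * n + 3 ≤ (j : ℕ) by omega with
      h | h | h | h | h | h
    · have t1 := hτ₁ j h
      have q1 := hQval (τ j)
      rw [t1, if_pos (by omega)] at q1
      have t2 := hτ₄ (Q (τ j)) (by omega)
      have q2 := hQval (τ (Q (τ j)))
      rw [t2, q1, if_neg (by omega)] at q2
      omega
    · have t1 := hτ₂ j h
      have q1 := hQval (τ j)
      rw [t1, if_pos (by omega)] at q1
      have t2 := hτ₅ (Q (τ j)) (by omega)
      have q2 := hQval (τ (Q (τ j)))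
      rw [t2, if_neg (by omega)] at q2
      omega
    · have t1 := hτ₃ j h
      have q1 := hQval (τ j)
      rw [t1, if_pos (by omega)] at q1
      have t2 := hτ₆ (Q (τ j)) (by omega)
      have q2 := hQval (τ (Q (τ j)))
      rw [t2, if_neg (by omega)] at q2
      omega
    · have t1 := hτ₅ j h
      have q1 := hQval (τ j)
      rw [t1, if_neg (by omega)] at q1
      have t2 := hτ₂ (Q (τ j)) (by omega)
      have q2 := hQval (τ (Q (τ j)))
      rw [t2, if_pos (by omega)] at q2
      omega
    · have t1 := hτ₆ j h
      have q1 := hQval (τ j)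
      rw [t1, if_neg (by omega)] at q1
      have t2 := hτ₃ (Q (τ j)) (by omega)
      have q2 := hQval (τ (Q (τ j)))
      rw [t2, if_pos (by omega)] at q2
      omega
    · have t1 := hτ₄ j h
      have q1 := hQval (τ j)
      rw [t1, if_neg (by omega)] at q1
      have hmem := mem (Q (τ j))
      have t2 := hτ₁ (Q (τ j)) (by omega)
      have q2 := hQval (τ (Q (τ j)))
      rw [t2, q1, if_pos (by omega)] at q2
      omega
  calc (Q * σ) ^ 4 = Q * (σ * Q * σ) * Q * (σ * Q * σ) := by rw [pow_succ, pow_succ, pow_succ, pow_one]; group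
    _ = Q * τ * Q * τ := by rw [hσ]
    _ = 1 := key
end

section
/- Let n ≥ 1. In Σ_{4n}, let Q be the permutation sending each j to j + 2n reduced modulo 4n into {1,…,4n}, and let τ = (1,3,5,…,2n−1)(2,4,6,…,2n)(4n−1,4n−3,…,2n+1)(4n,4n−2,…,2n+2). If σ ∈ Σ_{4n} satisfies σ ∘ Q ∘ σ = τ, then every orbit of the permutation Q ∘ σ on {1,…,4n} has exactly 4 elements. -/
/-- Let `n ≥ 1`. In `Σ_{4n}`, let `Q` send each `j` to `j + 2n` reduced
modulo `4n` into `{1,…,4n}`, and let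
`τ = (1,3,5,…,2n−1)(2,4,6,…,2n)(4n−1,4n−3,…,2n+1)(4n,4n−2,…,2n+2)`.
If `σ ∈ Σ_{4n}` satisfies `σ ∘ Q ∘ σ = τ`, then every orbit `{(Q∘σ)^k(j) : k ∈ ℤ}`
of `Q ∘ σ` on `{1,…,4n}` has exactly `4` elements. -/
theorem stmt_7 (n : ℕ) (hn : 1 ≤ n)
    (Q τ σ : Equiv.Perm {j : ℕ // j ∈ Finset.Icc 1 (4 * n)})
    (hQ : ∀ j : {j : ℕ // j ∈ Finset.Icc 1 (4 * n)}, (Q j : ℕ) = ((j : ℕ) - 1 + 2 * n) % (4 * n) + 1)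
    (hτ₁ : ∀ j : {j : ℕ // j ∈ Finset.Icc 1 (4 * n)}, (j : ℕ) ≤ 2 * n - 2 → (τ j : ℕ) = (j : ℕ) + 2)
    (hτ₂ : ∀ j : {j : ℕ // j ∈ Finset.Icc 1 (4 * n)}, (j : ℕ) = 2 * n - 1 → (τ j : ℕ) = 1)
    (hτ₃ : ∀ j : {j : ℕ // j ∈ Finset.Icc 1 (4 * n)}, (j : ℕ) = 2 * n → (τ j : ℕ) = 2)
    (hτ₄ : ∀ j : {j : ℕ // j ∈ Finset.Icc 1 (4 * n)}, 2 * n + 3 ≤ (j : ℕ) → (τ j : ℕ) = (j : ℕ) - 2)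
    (hτ₅ : ∀ j : {j : ℕ // j ∈ Finset.Icc 1 (4 * n)}, (j : ℕ) = 2 * n + 1 → (τ j : ℕ) = 4 * n - 1)
    (hτ₆ : ∀ j : {j : ℕ // j ∈ Finset.Icc 1 (4 * n)}, (j : ℕ) = 2 * n + 2 → (τ j : ℕ) = 4 * n)
    (hσ : σ * Q * σ = τ) :
    ∀ j : {j : ℕ // j ∈ Finset.Icc 1 (4 * n)}, (Set.range fun k : ℤ => ((Q * σ) ^ k) j).ncard = 4 := by
  have mem_bounds : ∀ x : {j : ℕ // j ∈ Finset.Icc 1 (4 * n)},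
      1 ≤ (x : ℕ) ∧ (x : ℕ) ≤ 4 * n := fun x => Finset.mem_Icc.mp x.2
  -- Q on the lower half
  have hQlow : ∀ x : {j : ℕ // j ∈ Finset.Icc 1 (4 * n)}, (x : ℕ) ≤ 2 * n →
      (Q x : ℕ) = (x : ℕ) + 2 * n := by
    intro x hx
    obtain ⟨h1, h2⟩ := mem_bounds x
    rw [hQ, Nat.mod_eq_of_lt (by omega)]
    omega
  -- Q on the upper half
  have hQhigh : ∀ x : {j : ℕ // j ∈ Finset.Icc 1 (4 * n)}, 2 * n < (x : ℕ) →
      (Q x : ℕ) = (x : ℕ) - 2 * n := by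
    intro x hx
    obtain ⟨h1, h2⟩ := mem_bounds x
    rw [hQ]
    have hrw : (x : ℕ) - 1 + 2 * n = ((x : ℕ) - 1 - 2 * n) + 4 * n := by omega
    rw [hrw, Nat.add_mod_right, Nat.mod_eq_of_lt (by omega)]
    omega
  -- Q is an involution
  have hQQ : ∀ x : {j : ℕ // j ∈ Finset.Icc 1 (4 * n)}, Q (Q x) = x := by
    intro x
    obtain ⟨h1, h2⟩ := mem_bounds x
    apply Subtype.ext
    rcases le_or_gt (x : ℕ) (2 * n) with hx | hx
    · have e1 := hQlow x hx
      have e2 := hQhigh (Q x) (by omega)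
      omega
    · have e1 := hQhigh x hx
      have e2 := hQlow (Q x) (by omega)
      omega
  -- τ preserves the halves
  have hτlow : ∀ x : {j : ℕ // j ∈ Finset.Icc 1 (4 * n)}, (x : ℕ) ≤ 2 * n →
      (τ x : ℕ) ≤ 2 * n := by
    intro x hx
    obtain ⟨h1, h2⟩ := mem_bounds x
    rcases show (x : ℕ) ≤ 2 * n - 2 ∨ (x : ℕ) = 2 * n - 1 ∨ (x : ℕ) = 2 * n by omega
      with h | h | h
    · have := hτ₁ x h; omega
    · have := hτ₂ x h; omega
    · have := hτ₃ x h; omega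
  have hτhigh : ∀ x : {j : ℕ // j ∈ Finset.Icc 1 (4 * n)}, 2 * n < (x : ℕ) →
      2 * n < (τ x : ℕ) := by
    intro x hx
    obtain ⟨h1, h2⟩ := mem_bounds x
    rcases show (x : ℕ) = 2 * n + 1 ∨ (x : ℕ) = 2 * n + 2 ∨ 2 * n + 3 ≤ (x : ℕ) by omega
      with h | h | h
    · have := hτ₅ x h; omega
    · have := hτ₆ x h; omega
    · have := hτ₄ x h; omega
  -- key identity: τ (Q (τ x)) = Q x
  have key : ∀ x : {j : ℕ // j ∈ Finset.Icc 1 (4 * n)}, τ (Q (τ x)) = Q x := by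
    intro x
    obtain ⟨h1, h2⟩ := mem_bounds x
    apply Subtype.ext
    rcases show (x : ℕ) ≤ 2 * n - 2 ∨ (x : ℕ) = 2 * n - 1 ∨ (x : ℕ) = 2 * n ∨
        (x : ℕ) = 2 * n + 1 ∨ (x : ℕ) = 2 * n + 2 ∨ 2 * n + 3 ≤ (x : ℕ) by omega
      with h | h | h | h | h | h
    · have e1 := hτ₁ x h
      have e2 := hQlow (τ x) (by omega)
      have e3 := hτ₄ (Q (τ x)) (by omega)
      have e4 := hQlow x (by omega)
      omega
    · have e1 := hτ₂ x h
      have e2 := hQlow (τ x) (by omega)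
      have e3 := hτ₅ (Q (τ x)) (by omega)
      have e4 := hQlow x (by omega)
      omega
    · have e1 := hτ₃ x h
      have e2 := hQlow (τ x) (by omega)
      have e3 := hτ₆ (Q (τ x)) (by omega)
      have e4 := hQlow x (by omega)
      omega
    · have e1 := hτ₅ x h
      have e2 := hQhigh (τ x) (by omega)
      have e3 := hτ₂ (Q (τ x)) (by omega)
      have e4 := hQhigh x (by omega)
      omega
    · have e1 := hτ₆ x h
      have e2 := hQhigh (τ x) (by omega)
      have e3 := hτ₃ (Q (τ x)) (by omega)
      have e4 := hQhigh x (by omega)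
      omega
    · have e1 := hτ₄ x h
      have e2 := hQhigh (τ x) (by omega)
      have e3 := hτ₁ (Q (τ x)) (by omega)
      have e4 := hQhigh x (by omega)
      omega
  set P : Equiv.Perm {j : ℕ // j ∈ Finset.Icc 1 (4 * n)} := Q * σ with hP
  have hP2 : P ^ 2 = Q * τ := by
    rw [hP, sq, ← hσ]
    group
  have hP4 : P ^ 4 = 1 := by
    have h42 : P ^ 4 = (P ^ 2) * (P ^ 2) := by group
    rw [hP2] at h42
    rw [h42]
    ext x
    simp only [Equiv.Perm.mul_apply, Equiv.Perm.one_apply, Equiv.Perm.coe_one, id_eq]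
    rw [key x, hQQ x]
  -- Q ∘ τ has no fixed points
  have hfix : ∀ x : {j : ℕ // j ∈ Finset.Icc 1 (4 * n)}, (Q * τ) x ≠ x := by
    intro x hx
    obtain ⟨h1, h2⟩ := mem_bounds x
    have hc : (Q (τ x) : ℕ) = (x : ℕ) := by
      rw [show Q (τ x) = x from hx]
    have hb := mem_bounds (τ x)
    rcases le_or_gt (x : ℕ) (2 * n) with h | h
    · have e1 := hτlow x h
      have e2 := hQlow (τ x) e1
      omega
    · have e1 := hτhigh x h
      have e2 := hQhigh (τ x) (by omega)
      omega
  have hP2fix : ∀ x : {j : ℕ // j ∈ Finset.Icc 1 (4 * n)}, P (P x) ≠ x := by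
    intro x hx
    apply hfix x
    rw [← hP2, sq]
    exact hx
  intro j
  -- distinctness of the four orbit points
  have d01 : j ≠ P j := by
    intro h
    exact hP2fix j (by rw [← h, ← h])
  have d02 : j ≠ P (P j) := fun h => hP2fix j h.symm
  have d03 : j ≠ P (P (P j)) := by
    intro h
    apply d01
    have := congrArg P h
    rw [show P (P (P (P j))) = (P ^ 4) j by simp [pow_succ, Equiv.Perm.mul_apply],
      hP4] at this
    simpa using this.symm
  have d12 : P j ≠ P (P j) := fun h => d01 (P.injective h)
  have d13 : P j ≠ P (P (P j)) := fun h => hP2fix (P j) h.symm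
  have d23 : P (P j) ≠ P (P (P j)) := fun h => d12 (P.injective h)
  have hpow : ∀ x : {j : ℕ // j ∈ Finset.Icc 1 (4 * n)}, True := fun _ => trivial
  have hP4z : P ^ (4 : ℤ) = 1 := by
    rw [show (4 : ℤ) = ((4 : ℕ) : ℤ) by norm_num, zpow_natCast, hP4]
  have hrange : (Set.range fun k : ℤ => (P ^ k) j) =
      ({j, P j, P (P j), P (P (P j))} : Set _) := by
    ext y
    constructor
    · rintro ⟨k, rfl⟩
      have hk : P ^ k = P ^ (k % 4) := by
        conv_lhs => rw [← Int.emod_add_mul_ediv k 4]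
        rw [zpow_add, zpow_mul, hP4z, one_zpow, mul_one]
      have hbd : k % 4 = 0 ∨ k % 4 = 1 ∨ k % 4 = 2 ∨ k % 4 = 3 := by omega
      simp only [Set.mem_insert_iff, Set.mem_singleton_iff]
      rcases hbd with h | h | h | h <;> rw [hk, h]
      · left; simp
      · right; left; simp
      · right; right; left
        rw [show (2 : ℤ) = ((2 : ℕ) : ℤ) by norm_num, zpow_natCast]
        simp [pow_succ, Equiv.Perm.mul_apply]
      · right; right; right
        rw [show (3 : ℤ) = ((3 : ℕ) : ℤ) by norm_num, zpow_natCast]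
        simp [pow_succ, Equiv.Perm.mul_apply]
    · intro hy
      simp only [Set.mem_insert_iff, Set.mem_singleton_iff] at hy
      rcases hy with rfl | rfl | rfl | rfl
      · exact ⟨0, by simp⟩
      · exact ⟨1, by simp⟩
      · refine ⟨((2 : ℕ) : ℤ), ?_⟩
        show (P ^ ((2 : ℕ) : ℤ)) j = _
        rw [zpow_natCast]
        simp [pow_succ, Equiv.Perm.mul_apply]
      · refine ⟨((3 : ℕ) : ℤ), ?_⟩
        show (P ^ ((3 : ℕ) : ℤ)) j = _
        rw [zpow_natCast]
        simp [pow_succ, Equiv.Perm.mul_apply]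
  rw [hrange]
  rw [Set.ncard_insert_of_notMem (by simp [d01, d02, d03]),
    Set.ncard_insert_of_notMem (by simp [d12, d13]),
    Set.ncard_insert_of_notMem (by simp [d23]),
    Set.ncard_singleton]
end

section
/- Let n ≥ 1. In Σ_{4n}, let Q be the permutation sending each j to j + 2n reduced modulo 4n into {1,…,4n}, and let τ = (1,3,5,…,2n−1)(2,4,6,…,2n)(4n−1,4n−3,…,2n+1)(4n,4n−2,…,2n+2). If σ ∈ Σ_{4n} satisfies σ ∘ Q ∘ σ = τ, then the permutation Q ∘ σ has exactly n orbits on {1,…,4n}. -/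
theorem orbitCount {α : Type*} [Fintype α] [DecidableEq α] (P : Equiv.Perm α)
    (h4 : ∀ x, P (P (P (P x))) = x) (h2 : ∀ x, P (P x) ≠ x) :
    {s : Set α | ∃ j, s = Set.range fun k : ℤ => (P ^ k) j}.ncard * 4 = Fintype.card α := by
  classical
  have hfix : ∀ x : α, P x ≠ x := fun x h => h2 x (by rw [h, h])
  have h3 : ∀ x : α, P (P (P x)) ≠ x := by
    intro x h
    have h' := congrArg (fun y => P y) h
    rw [h4 x] at h'
    exact hfix x h'.symm
  set orbF : α → Finset α := fun j => {j, P j, P (P j), P (P (P j))} with horbF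
  have hmem : ∀ j x : α, x ∈ orbF j ↔ x = j ∨ x = P j ∨ x = P (P j) ∨ x = P (P (P j)) := by
    intro j x; simp [horbF]
  have hP4 : P ^ 4 = 1 := by
    ext x
    simp [pow_succ, Equiv.Perm.mul_apply, h4]
  have hz4 : P ^ (4 : ℤ) = 1 := by
    rw [show (4:ℤ) = ((4:ℕ):ℤ) by norm_num, zpow_natCast, hP4]
  have hnat : ∀ (m : ℕ) (j : α), (P ^ (m : ℤ)) j = (P ^ m) j := by
    intro m j; rw [zpow_natCast]
  have happ : ∀ (m : ℕ) (x : α), (P ^ (m + 1)) x = P ((P ^ m) x) := by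
    intro m x; rw [pow_succ']; rfl
  have hzpow : ∀ (k : ℤ) (j : α), (P ^ k) j ∈ orbF j := by
    intro k j
    have hk : P ^ k = P ^ (k % 4) := by
      conv_lhs => rw [← Int.mul_ediv_add_emod k 4]
      rw [zpow_add, zpow_mul, hz4, one_zpow, one_mul]
    have hr0 : 0 ≤ k % 4 := Int.emod_nonneg k (by norm_num)
    have hr4 : k % 4 < 4 := Int.emod_lt_of_pos k (by norm_num)
    set m := (k % 4).toNat with hmdef
    have hm : k % 4 = (m : ℤ) := (Int.toNat_of_nonneg hr0).symm
    have hm4 : m < 4 := by omega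
    rw [hk, hm, zpow_natCast]
    interval_cases m <;>
      simp only [pow_zero, happ, Equiv.Perm.one_apply, hmem] <;> tauto
  have horb : ∀ j : α, (Set.range fun k : ℤ => (P ^ k) j) = ↑(orbF j) := by
    intro j
    ext x
    constructor
    · rintro ⟨k, rfl⟩
      exact hzpow k j
    · intro hx
      rw [Finset.mem_coe, hmem] at hx
      rcases hx with rfl | rfl | rfl | rfl
      · exact ⟨0, by simp⟩
      · exact ⟨1, by simp⟩
      · exact ⟨((2:ℕ):ℤ), by simp only [zpow_natCast]; rw [happ, happ, pow_zero]; rfl⟩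
      · exact ⟨((3:ℕ):ℤ), by simp only [zpow_natCast]; rw [happ, happ, happ, pow_zero]; rfl⟩
  have hstep : ∀ j, orbF (P j) = orbF j := by
    intro j
    ext x
    rw [hmem, hmem, h4 j]
    tauto
  have horbeq : ∀ j x, x ∈ orbF j → orbF x = orbF j := by
    intro j x hx
    rw [hmem] at hx
    rcases hx with rfl | rfl | rfl | rfl
    · rfl
    · exact hstep j
    · rw [hstep, hstep]
    · rw [hstep, hstep, hstep]
  have hcard : ∀ j, (orbF j).card = 4 := by
    intro j
    have d1 : P j ≠ j := hfix j
    have d2 : P (P j) ≠ j := h2 j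
    have d3 : P (P (P j)) ≠ j := h3 j
    have d4 : P (P j) ≠ P j := fun h => d1 (P.injective h)
    have d5 : P (P (P j)) ≠ P j := fun h => d2 (P.injective h)
    have d6 : P (P (P j)) ≠ P (P j) := fun h => d1 (P.injective (P.injective h))
    simp only [horbF]
    rw [Finset.card_insert_of_notMem (by simp [d1.symm, d2.symm, d3.symm]),
      Finset.card_insert_of_notMem (by simp [d4.symm, d5.symm]),
      Finset.card_insert_of_notMem (by simp [d6.symm]),
      Finset.card_singleton]
  set T : Finset (Finset α) := Finset.univ.image orbF with hT
  have hDisj : ∀ s ∈ T, ∀ t ∈ T, s ≠ t → Disjoint s t := by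
    intro s hs t ht hst
    rcases Finset.mem_image.mp hs with ⟨a, -, rfl⟩
    rcases Finset.mem_image.mp ht with ⟨b, -, rfl⟩
    rw [Finset.disjoint_left]
    intro x hxa hxb
    exact hst (by rw [← horbeq a x hxa, horbeq b x hxb])
  have hUnion : T.biUnion (fun s => s) = Finset.univ := by
    apply Finset.eq_univ_iff_forall.mpr
    intro x
    refine Finset.mem_biUnion.mpr ⟨orbF x, Finset.mem_image_of_mem _ (Finset.mem_univ x), ?_⟩
    rw [hmem]; left; rfl
  have hcount : Fintype.card α = T.card * 4 := by
    rw [← Finset.card_univ, ← hUnion, Finset.card_biUnion hDisj]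
    rw [Finset.sum_congr rfl (fun s hs => ?_), Finset.sum_const, smul_eq_mul]
    rcases Finset.mem_image.mp hs with ⟨a, -, rfl⟩
    exact hcard a
  have hS : {s : Set α | ∃ j, s = Set.range fun k : ℤ => (P ^ k) j}
      = (fun t : Finset α => (↑t : Set α)) '' ↑T := by
    ext s
    simp only [Set.mem_setOf_eq, Set.mem_image, Finset.mem_coe]
    constructor
    · rintro ⟨j, rfl⟩
      exact ⟨orbF j, Finset.mem_image_of_mem _ (Finset.mem_univ j), (horb j).symm⟩
    · rintro ⟨t, ht, rfl⟩
      rcases Finset.mem_image.mp ht with ⟨j, -, rfl⟩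
      exact ⟨j, (horb j).symm⟩
  rw [hS, Set.ncard_image_of_injective _ Finset.coe_injective, Set.ncard_coe_finset, ← hcount]



/-- Let `n ≥ 1`. In `Σ_{4n}`, let `Q` send each `j` to `j + 2n` reduced
modulo `4n` into `{1,…,4n}`, and let
`τ = (1,3,5,…,2n−1)(2,4,6,…,2n)(4n−1,4n−3,…,2n+1)(4n,4n−2,…,2n+2)`.
If `σ ∈ Σ_{4n}` satisfies `σ ∘ Q ∘ σ = τ`, then `Q ∘ σ` has exactly `n` orbits
on `{1,…,4n}`, the orbit of `j` being `{(Q∘σ)^k(j) : k ∈ ℤ}`. -/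
theorem stmt_8 (n : ℕ) (hn : 1 ≤ n)
    (Q τ σ : Equiv.Perm {j : ℕ // j ∈ Finset.Icc 1 (4 * n)})
    (hQ : ∀ j : {j : ℕ // j ∈ Finset.Icc 1 (4 * n)}, (Q j : ℕ) = ((j : ℕ) - 1 + 2 * n) % (4 * n) + 1)
    (hτ₁ : ∀ j : {j : ℕ // j ∈ Finset.Icc 1 (4 * n)}, (j : ℕ) ≤ 2 * n - 2 → (τ j : ℕ) = (j : ℕ) + 2)
    (hτ₂ : ∀ j : {j : ℕ // j ∈ Finset.Icc 1 (4 * n)}, (j : ℕ) = 2 * n - 1 → (τ j : ℕ) = 1)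
    (hτ₃ : ∀ j : {j : ℕ // j ∈ Finset.Icc 1 (4 * n)}, (j : ℕ) = 2 * n → (τ j : ℕ) = 2)
    (hτ₄ : ∀ j : {j : ℕ // j ∈ Finset.Icc 1 (4 * n)}, 2 * n + 3 ≤ (j : ℕ) → (τ j : ℕ) = (j : ℕ) - 2)
    (hτ₅ : ∀ j : {j : ℕ // j ∈ Finset.Icc 1 (4 * n)}, (j : ℕ) = 2 * n + 1 → (τ j : ℕ) = 4 * n - 1)
    (hτ₆ : ∀ j : {j : ℕ // j ∈ Finset.Icc 1 (4 * n)}, (j : ℕ) = 2 * n + 2 → (τ j : ℕ) = 4 * n)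
    (hσ : σ * Q * σ = τ) :
    {s : Set {j : ℕ // j ∈ Finset.Icc 1 (4 * n)} |
      ∃ j, s = Set.range fun k : ℤ => ((Q * σ) ^ k) j}.ncard = n := by
  classical
  -- bounds for each element
  have hbd : ∀ j : {j : ℕ // j ∈ Finset.Icc 1 (4 * n)}, 1 ≤ (j : ℕ) ∧ (j : ℕ) ≤ 4 * n := by
    intro j
    exact Finset.mem_Icc.mp j.2
  -- Q on the lower half
  have hQlo : ∀ (j : {j : ℕ // j ∈ Finset.Icc 1 (4 * n)}) (v : ℕ), (j : ℕ) = v → 1 ≤ v → v ≤ 2 * n → (Q j : ℕ) = v + 2 * n := by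
    intro j v hv h1 h2
    rw [hQ j, hv, Nat.mod_eq_of_lt (by omega)]
    omega
  -- Q on the upper half
  have hQhi : ∀ (j : {j : ℕ // j ∈ Finset.Icc 1 (4 * n)}) (v : ℕ), (j : ℕ) = v → 2 * n + 1 ≤ v → v ≤ 4 * n → (Q j : ℕ) = v - 2 * n := by
    intro j v hv h1 h2
    rw [hQ j, hv, Nat.mod_eq_sub_mod (by omega), Nat.mod_eq_of_lt (by omega)]
    omega
  -- the key pointwise computation
  have key : ∀ j : {j : ℕ // j ∈ Finset.Icc 1 (4 * n)}, ((Q (τ j)) : ℕ) ≠ (j : ℕ) ∧ ((Q (τ (Q (τ j)))) : ℕ) = (j : ℕ) := by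
    intro j
    obtain ⟨h1, h2⟩ := hbd j
    by_cases c1 : 2 * n + 3 ≤ (j : ℕ)
    · -- case F : τ j = j - 2, Q τ j = j - 2n - 2
      have s1 : (τ j : ℕ) = (j : ℕ) - 2 := hτ₄ j c1
      have s2 : ((Q (τ j)) : ℕ) = (j : ℕ) - 2 - 2 * n := hQhi (τ j) ((j : ℕ) - 2) s1 (by omega) (by omega)
      have s3 : (τ (Q (τ j)) : ℕ) = (j : ℕ) - 2 * n := by
        rw [hτ₁ (Q (τ j)) (by omega), s2]; omega
      have s4 : ((Q (τ (Q (τ j)))) : ℕ) = (j : ℕ) - 2 * n + 2 * n :=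
        hQlo (τ (Q (τ j))) ((j : ℕ) - 2 * n) s3 (by omega) (by omega)
      exact ⟨by omega, by omega⟩
    · by_cases c2 : (j : ℕ) = 2 * n + 2
      · have s1 : (τ j : ℕ) = 4 * n := hτ₆ j c2
        have s2 : ((Q (τ j)) : ℕ) = 4 * n - 2 * n := hQhi (τ j) (4 * n) s1 (by omega) (by omega)
        have s3 : (τ (Q (τ j)) : ℕ) = 2 := hτ₃ (Q (τ j)) (by omega)
        have s4 : ((Q (τ (Q (τ j)))) : ℕ) = 2 + 2 * n := hQlo (τ (Q (τ j))) 2 s3 (by omega) (by omega)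
        exact ⟨by omega, by omega⟩
      · by_cases c3 : (j : ℕ) = 2 * n + 1
        · have s1 : (τ j : ℕ) = 4 * n - 1 := hτ₅ j c3
          have s2 : ((Q (τ j)) : ℕ) = 4 * n - 1 - 2 * n := hQhi (τ j) (4 * n - 1) s1 (by omega) (by omega)
          have s3 : (τ (Q (τ j)) : ℕ) = 1 := hτ₂ (Q (τ j)) (by omega)
          have s4 : ((Q (τ (Q (τ j)))) : ℕ) = 1 + 2 * n := hQlo (τ (Q (τ j))) 1 s3 (by omega) (by omega)
          exact ⟨by omega, by omega⟩
        · by_cases c4 : (j : ℕ) = 2 * n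
          · have s1 : (τ j : ℕ) = 2 := hτ₃ j c4
            have s2 : ((Q (τ j)) : ℕ) = 2 + 2 * n := hQlo (τ j) 2 s1 (by omega) (by omega)
            have s3 : (τ (Q (τ j)) : ℕ) = 4 * n := hτ₆ (Q (τ j)) (by omega)
            have s4 : ((Q (τ (Q (τ j)))) : ℕ) = 4 * n - 2 * n :=
              hQhi (τ (Q (τ j))) (4 * n) s3 (by omega) (by omega)
            exact ⟨by omega, by omega⟩
          · by_cases c5 : (j : ℕ) = 2 * n - 1
            · have s1 : (τ j : ℕ) = 1 := hτ₂ j c5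
              have s2 : ((Q (τ j)) : ℕ) = 1 + 2 * n := hQlo (τ j) 1 s1 (by omega) (by omega)
              have s3 : (τ (Q (τ j)) : ℕ) = 4 * n - 1 := hτ₅ (Q (τ j)) (by omega)
              have s4 : ((Q (τ (Q (τ j)))) : ℕ) = 4 * n - 1 - 2 * n :=
                hQhi (τ (Q (τ j))) (4 * n - 1) s3 (by omega) (by omega)
              exact ⟨by omega, by omega⟩
            · -- case A : j ≤ 2n - 2
              have cA : (j : ℕ) ≤ 2 * n - 2 := by omega
              have s1 : (τ j : ℕ) = (j : ℕ) + 2 := hτ₁ j cA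
              have s2 : ((Q (τ j)) : ℕ) = (j : ℕ) + 2 + 2 * n :=
                hQlo (τ j) ((j : ℕ) + 2) s1 (by omega) (by omega)
              have s3 : (τ (Q (τ j)) : ℕ) = (j : ℕ) + 2 * n := by
                rw [hτ₄ (Q (τ j)) (by omega), s2]; omega
              have s4 : ((Q (τ (Q (τ j)))) : ℕ) = (j : ℕ) + 2 * n - 2 * n :=
                hQhi (τ (Q (τ j))) ((j : ℕ) + 2 * n) s3 (by omega) (by omega)
              exact ⟨by omega, by omega⟩
  -- translate to statements about P := Q * σ
  have hQτ : (Q * σ) * (Q * σ) = Q * τ := by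
    rw [← hσ]
    group
  have hsq : ∀ j : {j : ℕ // j ∈ Finset.Icc 1 (4 * n)}, (Q * σ) ((Q * σ) j) = Q (τ j) := by
    intro j
    have := DFunLike.congr_fun hQτ j
    simpa [Equiv.Perm.mul_apply] using this
  have h4 : ∀ x : {j : ℕ // j ∈ Finset.Icc 1 (4 * n)}, (Q * σ) ((Q * σ) ((Q * σ) ((Q * σ) x))) = x := by
    intro x
    rw [hsq x, hsq (Q (τ x))]
    exact Subtype.ext (key x).2
  have h2 : ∀ x : {j : ℕ // j ∈ Finset.Icc 1 (4 * n)}, (Q * σ) ((Q * σ) x) ≠ x := by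
    intro x h
    rw [hsq x] at h
    exact (key x).1 (congrArg Subtype.val h)
  have hmain := orbitCount (Q * σ) h4 h2
  rw [Fintype.card_coe (Finset.Icc 1 (4 * n)), Nat.card_Icc] at hmain
  omega
end

section
/- Let Q ∈ Σ₂₀ be the permutation sending each j to j + 10 reduced modulo 20 into {1,…,20}, and let τ = (1,3,5,7,9)(2,4,6,8,10)(19,17,15,13,11)(20,18,16,14,12). Then there exists a permutation σ ∈ Σ₂₀ such that: σ is parity reversing (j and σ(j) have opposite parity for all j), σ has exactly 3 cycles, none of the cycles of σ has length 2, and σ ∘ Q ∘ σ = τ. -/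
/-!
The witness is `σ = (1 2 7 10 11 14 15 16)(3 8 17 4 19 18 5 12)(6 13 20 9)`. Each cycle alternates
parity and has even length, so `σ` is parity reversing with cycle type `(8, 8, 4)`. The orbits of
`σ` are its `SameCycle` classes, which are decidable, so all four properties reduce to finite
computations over `{1, …, 20}`.
-/

open Finset

namespace Equiv.Perm

variable {α : Type*} [Fintype α] [DecidableEq α]

theorem range_zpow_apply_eq_filter_sameCycle (σ : Perm α) (j : α) :
    Set.range (fun k : ℤ => (σ ^ k) j) = ↑(univ.filter (σ.SameCycle j)) := by
  ext x
  simp [SameCycle]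

theorem ncard_range_zpow_apply (σ : Perm α) (j : α) :
    (Set.range fun k : ℤ => (σ ^ k) j).ncard = #(univ.filter (σ.SameCycle j)) := by
  rw [range_zpow_apply_eq_filter_sameCycle, Set.ncard_coe_finset]

theorem ncard_setOf_eq_range_zpow_apply (σ : Perm α) :
    {s : Set α | ∃ j, s = Set.range fun k : ℤ => (σ ^ k) j}.ncard =
      #(univ.image fun j => univ.filter (σ.SameCycle j)) := by
  have orbits_eq : {s : Set α | ∃ j, s = Set.range fun k : ℤ => (σ ^ k) j} =
      (↑) '' (↑(univ.image fun j => univ.filter (σ.SameCycle j)) : Set (Finset α)) := by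
    ext s
    simp [range_zpow_apply_eq_filter_sameCycle, eq_comm]
  rw [orbits_eq, Set.ncard_image_of_injective _ coe_injective, Set.ncard_coe_finset]

end Equiv.Perm

namespace FillingPermutation

open Equiv

abbrev Icc20 : Type := {j : ℕ // j ∈ Icc 1 20}

def sigmaNat : Perm ℕ :=
  List.formPerm [1, 2, 7, 10, 11, 14, 15, 16] * List.formPerm [3, 8, 17, 4, 19, 18, 5, 12] *
    List.formPerm [6, 13, 20, 9]

theorem sigmaNat_mem_Icc : ∀ n ∈ Icc 1 20, sigmaNat n ∈ Icc 1 20 := by decide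

def sigma : Perm Icc20 := sigmaNat.subtypePermOfFintype sigmaNat_mem_Icc

theorem sigma_apply_mod_two_ne (j : Icc20) : (j : ℕ) % 2 ≠ (sigma j : ℕ) % 2 := by
  revert j
  decide

theorem card_sigma_orbits : #(univ.image fun j => univ.filter (sigma.SameCycle j)) = 3 := by
  decide

theorem card_sigma_orbit_ne_two (j : Icc20) : #(univ.filter (sigma.SameCycle j)) ≠ 2 := by
  revert j
  decide

def tauNat (n : ℕ) : ℕ :=
  if n ≤ 8 then n + 2 else if n = 9 then 1 else if n = 10 then 2
  else if n = 11 then 19 else if n = 12 then 20 else n - 2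

theorem eq_tauNat {n t : ℕ}
    (h : (n ≤ 8 → t = n + 2) ∧ (n = 9 → t = 1) ∧ (n = 10 → t = 2) ∧
      (13 ≤ n → t = n - 2) ∧ (n = 11 → t = 19) ∧ (n = 12 → t = 20)) :
    t = tauNat n := by
  obtain ⟨h₈, h₉, h₁₀, h₁₃, h₁₁, h₁₂⟩ := h
  unfold tauNat
  split_ifs with n_le n_eq_9 n_eq_10 n_eq_11 n_eq_12
  exacts [h₈ n_le, h₉ n_eq_9, h₁₀ n_eq_10, h₁₁ n_eq_11, h₁₂ n_eq_12, h₁₃ (by omega)]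

set_option maxRecDepth 4000 in
theorem sigmaNat_shift_sigmaNat :
    ∀ n ∈ Icc 1 20, sigmaNat ((sigmaNat n - 1 + 10) % 20 + 1) = tauNat n := by
  decide

end FillingPermutation

open FillingPermutation in
/-- Let `Q ∈ Σ₂₀` send each `j` to `j + 10` reduced modulo `20` into
`{1,…,20}`, and let `τ = (1,3,5,7,9)(2,4,6,8,10)(19,17,15,13,11)(20,18,16,14,12)`.
Then there exists `σ ∈ Σ₂₀` such that: `σ` is parity reversing, `σ` has exactly `3`
cycles (orbits), none of the cycles of `σ` has length `2`, and `σ ∘ Q ∘ σ = τ`. -/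
theorem stmt_14 (Q τ : Equiv.Perm {j : ℕ // j ∈ Finset.Icc 1 20})
    (hQ : ∀ j : {j : ℕ // j ∈ Finset.Icc 1 20}, (Q j : ℕ) = ((j : ℕ) - 1 + 10) % 20 + 1)
    (hτ : ∀ j : {j : ℕ // j ∈ Finset.Icc 1 20},
      ((j : ℕ) ≤ 8 → (τ j : ℕ) = (j : ℕ) + 2) ∧
      ((j : ℕ) = 9 → (τ j : ℕ) = 1) ∧
      ((j : ℕ) = 10 → (τ j : ℕ) = 2) ∧
      (13 ≤ (j : ℕ) → (τ j : ℕ) = (j : ℕ) - 2) ∧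
      ((j : ℕ) = 11 → (τ j : ℕ) = 19) ∧
      ((j : ℕ) = 12 → (τ j : ℕ) = 20)) :
    ∃ σ : Equiv.Perm {j : ℕ // j ∈ Finset.Icc 1 20},
      (∀ j : {j : ℕ // j ∈ Finset.Icc 1 20}, (j : ℕ) % 2 ≠ (σ j : ℕ) % 2) ∧
      {s : Set {j : ℕ // j ∈ Finset.Icc 1 20} |
        ∃ j, s = Set.range fun k : ℤ => (σ ^ k) j}.ncard = 3 ∧
      (∀ j, (Set.range fun k : ℤ => (σ ^ k) j).ncard ≠ 2) ∧
      σ * Q * σ = τ := by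
  refine ⟨sigma, sigma_apply_mod_two_ne, ?_, fun j => ?_, ?_⟩
  · rw [Equiv.Perm.ncard_setOf_eq_range_zpow_apply]
    exact card_sigma_orbits
  · rw [Equiv.Perm.ncard_range_zpow_apply]
    exact card_sigma_orbit_ne_two j
  · ext j
    have hQσ : (Q (sigma j) : ℕ) = (sigmaNat j - 1 + 10) % 20 + 1 := hQ (sigma j)
    change sigmaNat (Q (sigma j)) = (τ j : ℕ)
    rw [hQσ, eq_tauNat (hτ j)]
    exact sigmaNat_shift_sigmaNat j j.2
end
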